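/- arXiv:1309.0673 — 5 statements merged into one kernel-verified Lean document; each statement's English description precedes it below -/
import Mathlib

section
/- Let S, T be operators defined on a dense subspace D of a Hilbert space H with D contained in the domains of S*, T*. Suppose the quasi-strong commutation relation holds: S is the D-generator of a weakly continuous semigroup V_S(α) and ⟨V_S(α)Tξ, η⟩ − ⟨V_S(α)ξ, T*η⟩ = α⟨V_S(α)ξ, η⟩ for all ξ, η ∈ D and α ≥ 0. Then for every z ∈ ℂ, every α ≥ 0 and every ξ ∈ D: α·|⟨V_S(α)ξ, ξ⟩| ≤ 2·max{‖(T−z)ξ‖, ‖(T*−z̄)ξ‖}·max{‖V_S(α)ξ‖, ‖V_S(α)*ξ‖}. -/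
open scoped ComplexInnerProductSpace
open Filter Topology

/-- If `S, T` satisfy the commutation relation `[S,T] = Id` on `D` in the quasi-strong sense,
then `α|⟨V_S(α)ξ, ξ⟩| ≤ 2 max{‖(T-z)ξ‖, ‖(T*-z̄)ξ‖} max{‖V_S(α)ξ‖, ‖V_S(α)*ξ‖}`. -/
theorem quasi_strong_CR_inequality
    {H : Type*} [NormedAddCommGroup H] [InnerProductSpace ℂ H] [CompleteSpace H]
    (D : Submodule ℂ H) (hD : Dense (D : Set H))
    (S T Sadj Tadj : H →ₗ[ℂ] H)
    (hSadj : ∀ ξ ∈ D, ∀ η ∈ D, ⟪S ξ, η⟫ = ⟪ξ, Sadj η⟫)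
    (hTadj : ∀ ξ ∈ D, ∀ η ∈ D, ⟪T ξ, η⟫ = ⟪ξ, Tadj η⟫)
    (V : ℝ → H →L[ℂ] H)
    (hV0 : V 0 = 1)
    (hVadd : ∀ s t : ℝ, 0 ≤ s → 0 ≤ t → V (s + t) = (V s).comp (V t))
    (hweakcont : ∀ ξ η : H, ContinuousOn (fun t : ℝ => ⟪V t ξ, η⟫) (Set.Ici (0 : ℝ)))
    -- `S` is the `D`-generator of the weakly continuous semigroup `V`
    (hgen : ∀ ξ ∈ D, ∀ η : H,
      Tendsto (fun t : ℝ => ⟪(t : ℂ)⁻¹ • (V t ξ - ξ), η⟫) (𝓝[>] (0 : ℝ)) (𝓝 ⟪S ξ, η⟫))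
    -- the quasi-strong commutation relation
    (hqs : ∀ ξ ∈ D, ∀ η ∈ D, ∀ α : ℝ, 0 ≤ α →
      ⟪V α (T ξ), η⟫ - ⟪V α ξ, Tadj η⟫ = (α : ℂ) * ⟪V α ξ, η⟫) :
    ∀ z : ℂ, ∀ α : ℝ, 0 ≤ α → ∀ ξ ∈ D,
      α * ‖⟪V α ξ, ξ⟫‖ ≤
        2 * max ‖T ξ - z • ξ‖ ‖Tadj ξ - (starRingEnd ℂ z) • ξ‖ *
          max ‖V α ξ‖ ‖ContinuousLinearMap.adjoint (V α) ξ‖ := by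
  intro z α hα ξ hξ
  have key := hqs ξ hξ ξ hξ α hα
  have h1 : (α : ℂ) * ⟪V α ξ, ξ⟫ =
      ⟪V α (T ξ - z • ξ), ξ⟫ - ⟪V α ξ, Tadj ξ - (starRingEnd ℂ z) • ξ⟫ := by
    rw [← key]
    simp only [map_sub, map_smul, inner_sub_left, inner_sub_right, inner_smul_left,
      inner_smul_right]
    ring
  have hrw : ⟪V α (T ξ - z • ξ), ξ⟫ = ⟪T ξ - z • ξ, ContinuousLinearMap.adjoint (V α) ξ⟫ := by
    rw [ContinuousLinearMap.adjoint_inner_right]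
  have hb1 : ‖⟪V α (T ξ - z • ξ), ξ⟫‖ ≤ ‖T ξ - z • ξ‖ * ‖ContinuousLinearMap.adjoint (V α) ξ‖ := by
    rw [hrw]; exact norm_inner_le_norm _ _
  have hb2 : ‖⟪V α ξ, Tadj ξ - (starRingEnd ℂ z) • ξ⟫‖ ≤
      ‖V α ξ‖ * ‖Tadj ξ - (starRingEnd ℂ z) • ξ‖ := norm_inner_le_norm _ _
  have hM1 : ‖T ξ - z • ξ‖ ≤ max ‖T ξ - z • ξ‖ ‖Tadj ξ - (starRingEnd ℂ z) • ξ‖ := le_max_left _ _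
  have hM2 : ‖Tadj ξ - (starRingEnd ℂ z) • ξ‖ ≤ max ‖T ξ - z • ξ‖ ‖Tadj ξ - (starRingEnd ℂ z) • ξ‖ :=
    le_max_right _ _
  have hN1 : ‖V α ξ‖ ≤ max ‖V α ξ‖ ‖ContinuousLinearMap.adjoint (V α) ξ‖ := le_max_left _ _
  have hN2 : ‖ContinuousLinearMap.adjoint (V α) ξ‖ ≤
      max ‖V α ξ‖ ‖ContinuousLinearMap.adjoint (V α) ξ‖ := le_max_right _ _
  calc α * ‖⟪V α ξ, ξ⟫‖ = ‖(α : ℂ) * ⟪V α ξ, ξ⟫‖ := by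
        rw [norm_mul, Complex.norm_real, Real.norm_of_nonneg hα]
    _ ≤ ‖⟪V α (T ξ - z • ξ), ξ⟫‖ + ‖⟪V α ξ, Tadj ξ - (starRingEnd ℂ z) • ξ⟫‖ := by
        rw [h1]; exact norm_sub_le _ _
    _ ≤ ‖T ξ - z • ξ‖ * ‖ContinuousLinearMap.adjoint (V α) ξ‖ +
        ‖V α ξ‖ * ‖Tadj ξ - (starRingEnd ℂ z) • ξ‖ := add_le_add hb1 hb2
    _ ≤ max ‖T ξ - z • ξ‖ ‖Tadj ξ - (starRingEnd ℂ z) • ξ‖ *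
          max ‖V α ξ‖ ‖ContinuousLinearMap.adjoint (V α) ξ‖ +
        max ‖V α ξ‖ ‖ContinuousLinearMap.adjoint (V α) ξ‖ *
          max ‖T ξ - z • ξ‖ ‖Tadj ξ - (starRingEnd ℂ z) • ξ‖ :=
        add_le_add
          (mul_le_mul hM1 hN2 (norm_nonneg _) ((norm_nonneg _).trans hM1))
          (mul_le_mul hN1 hM2 (norm_nonneg _) ((norm_nonneg _).trans hN1))
    _ = 2 * max ‖T ξ - z • ξ‖ ‖Tadj ξ - (starRingEnd ℂ z) • ξ‖ *
          max ‖V α ξ‖ ‖ContinuousLinearMap.adjoint (V α) ξ‖ := by ring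
end

section
/- Let S, T satisfy the quasi-strong commutation relation [S,T] = Id on D, with T symmetric on D (i.e., T restricted to D equals the restriction of T* to D). Then T restricted to D has no eigenvalues: if ξ₀ ∈ D, ξ₀ ≠ 0, then Tξ₀ ≠ λξ₀ for every λ ∈ ℂ. -/
open scoped ComplexInnerProductSpace
open Filter Topology

/-- If `S, T` satisfy the quasi-strong commutation relation `[S,T] = Id` on `D` and `T` is
symmetric on `D`, then `T` restricted to `D` has no eigenvalues. -/
theorem quasi_strong_CR_symmetric_no_point_spectrum
    {H : Type*} [NormedAddCommGroup H] [InnerProductSpace ℂ H] [CompleteSpace H]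
    (D : Submodule ℂ H) (hD : Dense (D : Set H))
    (S T Sadj Tadj : H →ₗ[ℂ] H)
    (hSadj : ∀ ξ ∈ D, ∀ η ∈ D, ⟪S ξ, η⟫ = ⟪ξ, Sadj η⟫)
    (hTadj : ∀ ξ ∈ D, ∀ η ∈ D, ⟪T ξ, η⟫ = ⟪ξ, Tadj η⟫)
    -- `T` is symmetric: `T` on `D` coincides with the restriction of `T*` to `D`
    (hTsymm : ∀ ξ ∈ D, Tadj ξ = T ξ)
    (V : ℝ → H →L[ℂ] H)
    (hV0 : V 0 = 1)
    (hVadd : ∀ s t : ℝ, 0 ≤ s → 0 ≤ t → V (s + t) = (V s).comp (V t))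
    (hweakcont : ∀ ξ η : H, ContinuousOn (fun t : ℝ => ⟪V t ξ, η⟫) (Set.Ici (0 : ℝ)))
    -- weak continuity at `0⁺`: `V(α) → Id` weakly
    (hid : ∀ ξ η : H, Tendsto (fun α : ℝ => ⟪V α ξ, η⟫) (𝓝[>] (0 : ℝ)) (𝓝 ⟪ξ, η⟫))
    -- `S` is the `D`-generator of the weakly continuous semigroup `V`
    (hgen : ∀ ξ ∈ D, ∀ η : H,
      Tendsto (fun t : ℝ => ⟪(t : ℂ)⁻¹ • (V t ξ - ξ), η⟫) (𝓝[>] (0 : ℝ)) (𝓝 ⟪S ξ, η⟫))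
    -- the quasi-strong commutation relation
    (hqs : ∀ ξ ∈ D, ∀ η ∈ D, ∀ α : ℝ, 0 ≤ α →
      ⟪V α (T ξ), η⟫ - ⟪V α ξ, Tadj η⟫ = (α : ℂ) * ⟪V α ξ, η⟫) :
    ∀ ξ₀ ∈ D, ξ₀ ≠ 0 → ∀ lam : ℂ, T ξ₀ ≠ lam • ξ₀ := by
  intro ξ₀ hξ₀ hne lam heig
  have hnorm : ⟪ξ₀, ξ₀⟫ ≠ 0 := fun h => hne (inner_self_eq_zero.mp h)
  -- λ is real: conj λ = λ
  have hsym : ⟪T ξ₀, ξ₀⟫ = ⟪ξ₀, T ξ₀⟫ := by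
    rw [hTadj ξ₀ hξ₀ ξ₀ hξ₀, hTsymm ξ₀ hξ₀]
  have hreal : (starRingEnd ℂ) lam = lam := by
    have := hsym
    rw [heig, inner_smul_left, inner_smul_right] at this
    exact mul_right_cancel₀ hnorm this
  -- for α > 0, ⟪V α ξ₀, ξ₀⟫ = 0
  have hzero : ∀ α : ℝ, 0 < α → ⟪V α ξ₀, ξ₀⟫ = 0 := by
    intro α hα
    have h := hqs ξ₀ hξ₀ ξ₀ hξ₀ α hα.le
    rw [heig, hTsymm ξ₀ hξ₀, heig, map_smul, inner_smul_left, inner_smul_right,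
      hreal, sub_self] at h
    have hα' : (α : ℂ) ≠ 0 := by
      exact_mod_cast hα.ne'
    exact (mul_eq_zero.mp h.symm).resolve_left hα'
  -- contradiction with weak continuity at 0⁺
  have h1 := hid ξ₀ ξ₀
  have h2 : Tendsto (fun α : ℝ => ⟪V α ξ₀, ξ₀⟫) (𝓝[>] (0 : ℝ)) (𝓝 0) := by
    refine Tendsto.congr' ?_ tendsto_const_nhds
    filter_upwards [self_mem_nhdsWithin] with α hα
    exact (hzero α hα).symm
  exact hnorm (tendsto_nhds_unique h1 h2)
end

section
/- Let S, T be symmetric operators on a dense domain D satisfying the weak Weyl commutation relation with weak Weyl extension H (a self-adjoint extension of S with D(T̄) ⊆ D(H) and ⟨e^{−itH}ξ, Tη⟩ = ⟨(T+t)ξ, e^{itH}η⟩ for ξ, η ∈ D, t ∈ ℝ). If T is essentially self-adjoint, then e^{itH} e^{−isT̄} = e^{−its} e^{−isT̄} e^{itH} for all s, t ∈ ℝ. -/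
/-!
Essential self-adjointness gives `T̄ = T*`, so the graph of `T̄` consists of the pairs `(x, y)` with
`⟪b, x⟫ = ⟪a, y⟫` for all `(a, b)` in the graph of `T`. Extending the weak Weyl relation from `D`
to `D(T̄)` by closedness of these conditions shows that `U(t)` maps `D(T̄)` into itself with
`T̄ U(t) = U(t) (T̄ - t)`. Hence for `ξ, η ∈ D(T̄)` both `u ↦ e^{-itu} U(-t) W(u) U(t) ξ` and
`u ↦ W(u) η` solve `f' = -i T̄ f`; as `T̄` is symmetric, their inner product is constant in `u`.
Comparing `u = 0` with `u = s` and using the density of `D(T̄)` gives the Weyl relation.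
-/

open scoped InnerProductSpace ComplexInnerProductSpace
open Filter Topology

namespace LinearPMap

section Closure

variable {R E F : Type*} [CommRing R] [AddCommGroup E] [AddCommGroup F] [Module R E] [Module R F]
  [TopologicalSpace E] [TopologicalSpace F] [ContinuousAdd E] [ContinuousAdd F]
  [TopologicalSpace R] [ContinuousSMul R E] [ContinuousSMul R F]

theorem IsClosable.closure_graph_subset {T : E →ₗ.[R] F} (hT : T.IsClosable) {C : Set (E × F)}
    (hC : _root_.IsClosed C) (h : (T.graph : Set (E × F)) ⊆ C) :
    (T.closure.graph : Set (E × F)) ⊆ C := by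
  rw [← hT.graph_closure_eq_closure_graph, Submodule.topologicalClosure_coe]
  exact closure_minimal h hC

end Closure

section Adjoint

variable {𝕜 E F : Type*} [RCLike 𝕜] [NormedAddCommGroup E] [InnerProductSpace 𝕜 E]
  [NormedAddCommGroup F] [InnerProductSpace 𝕜 F] [CompleteSpace E] {T : E →ₗ.[𝕜] F}

theorem mem_adjoint_graph_iff (hT : Dense (T.domain : Set E)) {x : F} {y : E} :
    (x, y) ∈ T.adjoint.graph ↔ ∀ a b, (a, b) ∈ T.graph → ⟪b, x⟫_𝕜 = ⟪a, y⟫_𝕜 := by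
  simp only [adjoint_graph_eq_graph_adjoint hT, Submodule.mem_adjoint_iff, sub_eq_zero]

theorem IsClosable.inner_eq_of_mem_adjoint_graph (hcl : T.IsClosable)
    (hT : Dense (T.domain : Set E)) {x a : E} {y b : F} (hxy : (x, y) ∈ T.closure.graph)
    (hab : (b, a) ∈ T.adjoint.graph) : ⟪y, b⟫_𝕜 = ⟪x, a⟫_𝕜 :=
  hcl.closure_graph_subset (C := {p | ⟪p.2, b⟫_𝕜 = ⟪p.1, a⟫_𝕜})
    (isClosed_eq (by fun_prop) (by fun_prop)) (fun p hp ↦ (mem_adjoint_graph_iff hT).1 hab _ _ hp)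
    hxy

end Adjoint

end LinearPMap

section SchrodingerEquation

variable {E : Type*} [NormedAddCommGroup E] [InnerProductSpace ℂ E]

def IsSchrodingerSolution (G : E →ₗ.[ℂ] E) (f : ℝ → E) : Prop :=
  ∀ u, ∃ v, (f u, v) ∈ G.graph ∧ HasDerivAt f ((-Complex.I) • v) u

theorem IsSchrodingerSolution.inner_eq_inner_zero {G : E →ₗ.[ℂ] E}
    (hsymm : ∀ x y a b, (x, y) ∈ G.graph → (a, b) ∈ G.graph → ⟪y, a⟫ = ⟪x, b⟫) {f g : ℝ → E}
    (hf : IsSchrodingerSolution G f) (hg : IsSchrodingerSolution G g) (u : ℝ) :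
    ⟪f u, g u⟫ = ⟪f 0, g 0⟫ := by
  have hderiv : ∀ u, HasDerivAt (fun u ↦ ⟪f u, g u⟫) 0 u := by
    intro u
    obtain ⟨v, hv, hfd⟩ := hf u
    obtain ⟨w, hw, hgd⟩ := hg u
    refine (hfd.inner ℂ hgd).congr_deriv ?_
    rw [inner_smul_left, inner_smul_right, hsymm _ _ _ _ hv hw]
    simp
  exact is_const_of_deriv_eq_zero (fun u ↦ (hderiv u).differentiableAt)
    (fun u ↦ (hderiv u).deriv) u 0

end SchrodingerEquation

section UnitaryGroup

variable {E : Type*} [NormedAddCommGroup E] [InnerProductSpace ℂ E]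

structure IsUnitaryGroup (V : ℝ → E →L[ℂ] E) : Prop where
  map_zero : V 0 = 1
  map_add : ∀ s t, V (s + t) = (V s).comp (V t)
  norm_map : ∀ t x, ‖V t x‖ = ‖x‖

/-- `V s = e^{-isG}` in the sense of Stone's theorem. -/
structure HasGenerator (V : ℝ → E →L[ℂ] E) (G : E →ₗ.[ℂ] E) : Prop where
  tendsto : ∀ ξ : G.domain, Tendsto (fun s : ℝ ↦ (s : ℂ)⁻¹ • (V s (ξ : E) - (ξ : E)))
    (𝓝[≠] (0 : ℝ)) (𝓝 ((-Complex.I) • G ξ))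
  mem_domain : ∀ ξ η : E, Tendsto (fun s : ℝ ↦ (s : ℂ)⁻¹ • (V s ξ - ξ))
    (𝓝[≠] (0 : ℝ)) (𝓝 η) → ξ ∈ G.domain

namespace IsUnitaryGroup

variable {V : ℝ → E →L[ℂ] E}

theorem apply_apply (hV : IsUnitaryGroup V) (s t : ℝ) (x : E) : V s (V t x) = V (s + t) x := by
  rw [hV.map_add]
  rfl

theorem apply_neg_apply (hV : IsUnitaryGroup V) (t : ℝ) (x : E) : V t (V (-t) x) = x := by
  rw [hV.apply_apply, add_neg_cancel, hV.map_zero]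
  rfl

theorem neg_apply_apply (hV : IsUnitaryGroup V) (t : ℝ) (x : E) : V (-t) (V t x) = x := by
  simpa using hV.apply_neg_apply (-t) x

theorem apply_comm (hV : IsUnitaryGroup V) (s t : ℝ) (x : E) : V s (V t x) = V t (V s x) := by
  rw [hV.apply_apply, hV.apply_apply, add_comm]

theorem surjective (hV : IsUnitaryGroup V) (t : ℝ) : Function.Surjective (V t) :=
  fun x ↦ ⟨V (-t) x, hV.apply_neg_apply t x⟩

theorem inner_map_map (hV : IsUnitaryGroup V) (t : ℝ) (x y : E) : ⟪V t x, V t y⟫ = ⟪x, y⟫ :=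
  LinearIsometry.inner_map_map ⟨(V t).toLinearMap, hV.norm_map t⟩ x y

theorem inner_neg_apply_left (hV : IsUnitaryGroup V) (t : ℝ) (x y : E) :
    ⟪V (-t) x, y⟫ = ⟪x, V t y⟫ := by
  rw [← hV.inner_map_map t, hV.apply_neg_apply]

variable {G : E →ₗ.[ℂ] E}

theorem hasDerivAt_zero (hV : IsUnitaryGroup V) (hG : HasGenerator V G) {x y : E}
    (hxy : (x, y) ∈ G.graph) :
    HasDerivAt (fun u ↦ V u x) ((-Complex.I) • y) 0 := by
  obtain ⟨ξ, rfl, rfl⟩ := G.mem_graph_iff.1 hxy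
  rw [hasDerivAt_iff_tendsto_slope]
  convert hG.tendsto ξ using 2 with s
  rw [slope_def_module, ← Complex.coe_smul, hV.map_zero]
  simp

theorem map_mem_graph (hV : IsUnitaryGroup V) (hG : HasGenerator V G) {x y : E}
    (hxy : (x, y) ∈ G.graph) (t : ℝ) : (V t x, V t y) ∈ G.graph := by
  obtain ⟨ξ, rfl, rfl⟩ := G.mem_graph_iff.1 hxy
  have hlim : Tendsto (fun s : ℝ ↦ (s : ℂ)⁻¹ • (V s (V t ξ) - V t ξ)) (𝓝[≠] 0)
      (𝓝 (V t ((-Complex.I) • G ξ))) := by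
    refine (((V t).continuous.tendsto _).comp (hG.tendsto ξ)).congr fun s ↦ ?_
    simp only [Function.comp_apply, map_smul, map_sub, hV.apply_comm t s]
  have hmem : V t ξ ∈ G.domain := hG.mem_domain _ _ hlim
  have hval := tendsto_nhds_unique (hG.tendsto ⟨_, hmem⟩) hlim
  rw [map_smul] at hval
  exact (G.image_iff hmem).1 (smul_right_injective E (neg_ne_zero.2 Complex.I_ne_zero) hval).symm

theorem isSchrodingerSolution (hV : IsUnitaryGroup V) (hG : HasGenerator V G) {x y : E}
    (hxy : (x, y) ∈ G.graph) : IsSchrodingerSolution G (fun u ↦ V u x) := by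
  intro s
  have hs := hV.map_mem_graph hG hxy s
  refine ⟨V s y, hs, ?_⟩
  have h := HasDerivAt.comp_sub_const s s (by rw [sub_self]; exact hV.hasDerivAt_zero hG hs)
  simpa only [hV.apply_apply, sub_add_cancel] using h

end IsUnitaryGroup

end UnitaryGroup

theorem hasDerivAt_cexp_neg_I_mul_mul (t u : ℝ) :
    HasDerivAt (fun u : ℝ ↦ Complex.exp (-(Complex.I * t * u)))
      (-(Complex.I * t) * Complex.exp (-(Complex.I * t * u))) u := by
  have h := (((hasDerivAt_id (u : ℂ)).const_mul (-(Complex.I * t))).cexp).comp_ofReal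
  convert h using 1
  · ext v
    simp only [id, neg_mul]
  · simp only [id, mul_one, neg_mul]
    ring

section WeakWeyl

variable {E : Type*} [NormedAddCommGroup E] [InnerProductSpace ℂ E] [CompleteSpace E]
  {T : E →ₗ.[ℂ] E} {U W : ℝ → E →L[ℂ] E}

def WeakWeylRelation (T : E →ₗ.[ℂ] E) (U : ℝ → E →L[ℂ] E) : Prop :=
  ∀ (ξ η : T.domain) (t : ℝ), ⟪U (-t) (ξ : E), T η⟫ = ⟪T ξ + (t : ℂ) • (ξ : E), U t (η : E)⟫

namespace WeakWeylRelation

theorem map_mem_adjoint_graph (hww : WeakWeylRelation T U) (hU : IsUnitaryGroup U)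
    (hT : Dense (T.domain : Set E)) (hcl : T.IsClosable) {x y : E}
    (hxy : (x, y) ∈ T.closure.graph) (t : ℝ) :
    (U t x, U t y - (t : ℂ) • U t x) ∈ T.adjoint.graph := by
  rw [LinearPMap.mem_adjoint_graph_iff hT]
  intro a b hab
  obtain ⟨ξ, rfl, rfl⟩ := T.mem_graph_iff.1 hab
  have hext : ⟪T ξ + (t : ℂ) • (ξ : E), U t x⟫ = ⟪(ξ : E), U t y⟫ := by
    refine hcl.closure_graph_subset
      (C := {p | ⟪T ξ + (t : ℂ) • (ξ : E), U t p.1⟫ = ⟪(ξ : E), U t p.2⟫})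
      (isClosed_eq (by fun_prop) (by fun_prop)) ?_ hxy
    rintro ⟨x', y'⟩ hp
    obtain ⟨η, rfl, rfl⟩ := T.mem_graph_iff.1 hp
    exact (hww ξ η t).symm.trans (hU.inner_neg_apply_left t _ _)
  rw [inner_sub_right, inner_smul_right, ← hext, inner_add_left, inner_smul_left,
    Complex.conj_ofReal]
  ring

theorem isSchrodingerSolution_twist (hww : WeakWeylRelation T U) (hU : IsUnitaryGroup U)
    (hT : Dense (T.domain : Set E)) (hcl : T.IsClosable) (hess : T.adjoint = T.closure)
    {g : ℝ → E} (hg : IsSchrodingerSolution T.closure g) (t : ℝ) :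
    IsSchrodingerSolution T.closure
      (fun u ↦ Complex.exp (-(Complex.I * t * u)) • U (-t) (g u)) := by
  intro u
  obtain ⟨v, hv, hgd⟩ := hg u
  have hmem := hess ▸ hww.map_mem_adjoint_graph hU hT hcl hv (-t)
  refine ⟨Complex.exp (-(Complex.I * t * u)) • (U (-t) v - ((-t : ℝ) : ℂ) • U (-t) (g u)),
    T.closure.graph.smul_mem (Complex.exp (-(Complex.I * t * u))) hmem, ?_⟩
  have hUd := ((U (-t)).restrictScalars ℝ).hasFDerivAt.comp_hasDerivAt u hgd
  refine ((hasDerivAt_cexp_neg_I_mul_mul t u).smul hUd).congr_deriv ?_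
  simp only [ContinuousLinearMap.coe_restrictScalars', Function.comp_apply, map_smul,
    Complex.ofReal_neg]
  module

theorem comp_eq_smul_comp (hww : WeakWeylRelation T U) (hU : IsUnitaryGroup U)
    (hW : IsUnitaryGroup W) (hT : Dense (T.domain : Set E)) (hcl : T.IsClosable)
    (hess : T.adjoint = T.closure) (hWG : HasGenerator W T.closure) (s t : ℝ) :
    (U t).comp (W s) = Complex.exp (-(Complex.I * t * s)) • ((W s).comp (U t)) := by
  have hsymm : ∀ x y a b, (x, y) ∈ T.closure.graph → (a, b) ∈ T.closure.graph →
      ⟪y, a⟫ = ⟪x, b⟫ :=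
    fun x y a b hxy hab ↦ hcl.inner_eq_of_mem_adjoint_graph hT hxy (hess ▸ hab)
  have hdense : Dense (T.closure.domain : Set E) := hT.mono T.le_closure.1
  have hdomain : ∀ x ∈ T.closure.domain,
      Complex.exp (-(Complex.I * t * s)) • U (-t) (W s (U t x)) = W s x := by
    intro x hx
    have hUx := hess ▸ hww.map_mem_adjoint_graph hU hT hcl (T.closure.mem_graph ⟨x, hx⟩) t
    have hf := hww.isSchrodingerSolution_twist hU hT hcl hess
      (hW.isSchrodingerSolution hWG hUx) t
    refine ((hW.surjective s).denseRange.dense_image (W s).continuous hdense).eq_of_inner_left ℂ ?_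
    rintro _ ⟨y, hy, rfl⟩
    have hconst := hf.inner_eq_inner_zero hsymm
      (hW.isSchrodingerSolution hWG (T.closure.mem_graph ⟨y, hy⟩)) s
    simp only [hW.map_zero, one_apply_eq_self, Complex.ofReal_zero, mul_zero, neg_zero,
      Complex.exp_zero, one_smul, hU.neg_apply_apply] at hconst
    rw [hconst, hW.inner_map_map]
  have hall := Continuous.ext_on hdense (by fun_prop) (W s).continuous hdomain
  ext x
  rw [ContinuousLinearMap.comp_apply, ← congrFun hall x]
  simp [hU.apply_neg_apply]

end WeakWeylRelation

end WeakWeyl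

theorem weak_weyl_essentially_selfAdjoint_implies_weyl_general
    {H₀ : Type*} [NormedAddCommGroup H₀] [InnerProductSpace ℂ H₀] [CompleteSpace H₀]
    (D : Submodule ℂ H₀) (hD : Dense (D : Set H₀))
    (T : H₀ →ₗ.[ℂ] H₀) (hTdom : T.domain = D)
    (hTclosable : T.IsClosable)
    -- `U t = e^{itA}`: the unitary one-parameter group generated by `A` (Stone's theorem)
    (U : ℝ → H₀ →L[ℂ] H₀)
    (hU0 : U 0 = 1) (hUadd : ∀ s t : ℝ, U (s + t) = (U s).comp (U t))
    (hUunit : ∀ t : ℝ, ∀ ξ : H₀, ‖U t ξ‖ = ‖ξ‖)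
    -- (ww2): `⟨e^{-itA}ξ, Tη⟩ = ⟨(T + t)ξ, e^{itA}η⟩` for `ξ, η ∈ D`, `t ∈ ℝ`
    (hww2 : ∀ (ξ η : T.domain) (t : ℝ),
      ⟪U (-t) (ξ : H₀), T η⟫ = ⟪T ξ + (t : ℂ) • (ξ : H₀), U t (η : H₀)⟫)
    -- `T` is essentially self-adjoint
    (hess : T.adjoint = T.closure)
    -- `W s = e^{-isT̄}`: the unitary one-parameter group generated by `-T̄` (Stone's theorem)
    (W : ℝ → H₀ →L[ℂ] H₀)
    (hW0 : W 0 = 1) (hWadd : ∀ s t : ℝ, W (s + t) = (W s).comp (W t))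
    (hWunit : ∀ s : ℝ, ∀ ξ : H₀, ‖W s ξ‖ = ‖ξ‖)
    (hWgen : ∀ ξ : T.closure.domain,
      Tendsto (fun s : ℝ => (s : ℂ)⁻¹ • (W s (ξ : H₀) - (ξ : H₀)))
        (𝓝[≠] (0 : ℝ)) (𝓝 ((-Complex.I) • T.closure ξ)))
    (hWgen' : ∀ ξ η : H₀, Tendsto (fun s : ℝ => (s : ℂ)⁻¹ • (W s ξ - ξ))
      (𝓝[≠] (0 : ℝ)) (𝓝 η) → ξ ∈ T.closure.domain) :
    ∀ s t : ℝ,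
      (U t).comp (W s) = Complex.exp (-(Complex.I * t * s)) • ((W s).comp (U t)) :=
  WeakWeylRelation.comp_eq_smul_comp hww2 ⟨hU0, hUadd, hUunit⟩ ⟨hW0, hWadd, hWunit⟩
    (hTdom ▸ hD) hTclosable hess ⟨hWgen, hWgen'⟩

/-- If `{S, T}` satisfy the weak Weyl commutation relation with weak Weyl extension `A`
(a self-adjoint extension of `S`) and `T` is essentially self-adjoint, then the unitary
groups `U(t) = e^{itA}` and `W(s) = e^{-isT̄}` satisfy the Weyl commutation relation
`e^{itA} e^{-isT̄} = e^{-its} e^{-isT̄} e^{itA}`. -/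
theorem weak_weyl_essentially_selfAdjoint_implies_weyl
    {H₀ : Type*} [NormedAddCommGroup H₀] [InnerProductSpace ℂ H₀] [CompleteSpace H₀]
    (D : Submodule ℂ H₀) (hD : Dense (D : Set H₀))
    (S T : H₀ →ₗ.[ℂ] H₀) (hSdom : S.domain = D) (hTdom : T.domain = D)
    -- `S` and `T` are symmetric
    (hSsymm : ∀ ξ η : S.domain, ⟪S ξ, (η : H₀)⟫ = ⟪(ξ : H₀), S η⟫)
    (hTsymm : ∀ ξ η : T.domain, ⟪T ξ, (η : H₀)⟫ = ⟪(ξ : H₀), T η⟫)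
    (hTclosable : T.IsClosable)
    -- `A` is a self-adjoint extension of `S`
    (A : H₀ →ₗ.[ℂ] H₀) (hSA : S ≤ A) (hAdense : Dense (A.domain : Set H₀))
    (hAsa : A.adjoint = A)
    -- (ww1): `D(T̄) ⊆ D(A)`
    (hww1 : T.closure.domain ≤ A.domain)
    -- `U t = e^{itA}`: the unitary one-parameter group generated by `A` (Stone's theorem)
    (U : ℝ → H₀ →L[ℂ] H₀)
    (hU0 : U 0 = 1) (hUadd : ∀ s t : ℝ, U (s + t) = (U s).comp (U t))
    (hUunit : ∀ t : ℝ, ∀ ξ : H₀, ‖U t ξ‖ = ‖ξ‖)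
    (hUgen : ∀ ξ : A.domain, Tendsto (fun t : ℝ => (t : ℂ)⁻¹ • (U t (ξ : H₀) - (ξ : H₀)))
      (𝓝[≠] (0 : ℝ)) (𝓝 (Complex.I • A ξ)))
    (hUgen' : ∀ ξ η : H₀, Tendsto (fun t : ℝ => (t : ℂ)⁻¹ • (U t ξ - ξ))
      (𝓝[≠] (0 : ℝ)) (𝓝 η) → ξ ∈ A.domain)
    -- (ww2): `⟨e^{-itA}ξ, Tη⟩ = ⟨(T + t)ξ, e^{itA}η⟩` for `ξ, η ∈ D`, `t ∈ ℝ`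
    (hww2 : ∀ (ξ η : T.domain) (t : ℝ),
      ⟪U (-t) (ξ : H₀), T η⟫ = ⟪T ξ + (t : ℂ) • (ξ : H₀), U t (η : H₀)⟫)
    -- `T` is essentially self-adjoint
    (hess : T.adjoint = T.closure)
    -- `W s = e^{-isT̄}`: the unitary one-parameter group generated by `-T̄` (Stone's theorem)
    (W : ℝ → H₀ →L[ℂ] H₀)
    (hW0 : W 0 = 1) (hWadd : ∀ s t : ℝ, W (s + t) = (W s).comp (W t))
    (hWunit : ∀ s : ℝ, ∀ ξ : H₀, ‖W s ξ‖ = ‖ξ‖)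
    (hWgen : ∀ ξ : T.closure.domain,
      Tendsto (fun s : ℝ => (s : ℂ)⁻¹ • (W s (ξ : H₀) - (ξ : H₀)))
        (𝓝[≠] (0 : ℝ)) (𝓝 ((-Complex.I) • T.closure ξ)))
    (hWgen' : ∀ ξ η : H₀, Tendsto (fun s : ℝ => (s : ℂ)⁻¹ • (W s ξ - ξ))
      (𝓝[≠] (0 : ℝ)) (𝓝 η) → ξ ∈ T.closure.domain) :
    ∀ s t : ℝ,
      (U t).comp (W s) = Complex.exp (-(Complex.I * t * s)) • ((W s).comp (U t)) :=
  weak_weyl_essentially_selfAdjoint_implies_weyl_general D hD T hTdom hTclosable U hU0 hUadd hUunit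
    hww2 hess W hW0 hWadd hWunit hWgen hWgen'
end

section
/- Let {φ_n}, {ψ_n} be biorthogonal bases of H contained in a dense subspace D, with distinct positive reals α_k, and let X = Σ_k α_k(ψ_k ⊗ φ̄_k) with D ⊆ D(X). Suppose S, T are operators on D with Sφ₀ = 0. Then the following are equivalent: (1) X*(Tφ_n) = α_{n+1}(Tφ_n) for all n; (2) for every n there exists γ_n ∈ ℂ with Tφ_n = γ_n φ_{n+1}; (3) for every n there exists β_n ∈ ℂ with T*ψ_n = β_n ψ_{n−1} (β₀ = 0, T* denoting the adjoint restricted to D). Moreover β_n = conjugate(γ_{n−1}) for n ≥ 1. -/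
/-!
Everything is read off the coefficients of the biorthogonal expansions. Since the `α_k` are
distinct, `X* (T φ_n) = α_{n+1} T φ_n` forces every coefficient `⟪ψ_k, T φ_n⟫` with `k ≠ n + 1`
to vanish. As `⟪ψ_k, T φ_n⟫ = conj ⟪φ_n, T† ψ_k⟫`, the matrix of `T` in `{φ_n}` is the conjugate
transpose of that of `T†` in `{ψ_n}`, so `T` raises along `{φ_n}` exactly when `T†` lowers along
`{ψ_n}`, with conjugate coefficients.
-/

open scoped ComplexInnerProductSpace ComplexConjugate InnerProductSpace

section BiorthogonalSystems

variable {𝕜 H ι : Type*} [RCLike 𝕜] [NormedAddCommGroup H] [InnerProductSpace 𝕜 H]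

theorem eq_smul_of_hasSum_of_ne {f : ι → H} {a : ι → 𝕜} {v : H}
    (hv : HasSum (fun k => a k • f k) v) {m : ι} (h : ∀ k ≠ m, a k = 0) : v = a m • f m :=
  hv.unique (hasSum_single m fun k hk => by simp [h k hk])

variable (𝕜) [DecidableEq ι]

def Biorthogonal (e f : ι → H) : Prop :=
  ∀ i j, ⟪e i, f j⟫_𝕜 = if i = j then 1 else 0

variable {𝕜} {e f : ι → H}

namespace Biorthogonal

theorem symm (hb : Biorthogonal 𝕜 e f) : Biorthogonal 𝕜 f e := fun i j => by
  rw [← inner_conj_symm, hb j i]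
  split_ifs <;> simp_all [eq_comm]

theorem inner_smul (hb : Biorthogonal 𝕜 e f) (c : 𝕜) (i j : ι) :
    ⟪e i, c • f j⟫_𝕜 = if i = j then c else 0 := by
  rw [inner_smul_right, hb]
  split_ifs <;> simp

theorem inner_eq_of_hasSum (hb : Biorthogonal 𝕜 e f) {a : ι → 𝕜} {v : H}
    (hv : HasSum (fun k => a k • f k) v) (j : ι) : ⟪e j, v⟫_𝕜 = a j := by
  have hsum := (innerSL 𝕜 (e j)).hasSum hv
  simp only [innerSL_apply_apply, hb.inner_smul] at hsum
  simpa using hsum.unique (hasSum_single j fun k hk => by simp [Ne.symm hk])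

theorem exists_eq_smul_iff (hb : Biorthogonal 𝕜 e f) {v : H}
    (hv : HasSum (fun k => ⟪e k, v⟫_𝕜 • f k) v) (m : ι) :
    (∃ γ : 𝕜, v = γ • f m) ↔ ∀ k ≠ m, ⟪e k, v⟫_𝕜 = 0 := by
  constructor
  · rintro ⟨γ, rfl⟩ k hk
    simp [hb.inner_smul, hk]
  · exact fun h => ⟨_, eq_smul_of_hasSum_of_ne hv h⟩

/-- `v` is an eigenvector of `Σ_k α_k (f_k ⊗ ē_k)` for the eigenvalue `α_m` exactly when it is
a multiple of `f m`, provided the `α_k` are distinct. -/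
theorem hasSum_smul_iff_exists_eq_smul (hb : Biorthogonal 𝕜 e f) {α : ι → 𝕜}
    (hα : Function.Injective α) {v : H} (hv : HasSum (fun k => ⟪e k, v⟫_𝕜 • f k) v) (m : ι) :
    HasSum (fun k => (α k * ⟪e k, v⟫_𝕜) • f k) (α m • v) ↔ ∃ γ : 𝕜, v = γ • f m := by
  rw [hb.exists_eq_smul_iff hv]
  have hscaled : HasSum (fun k => (α m * ⟪e k, v⟫_𝕜) • f k) (α m • v) := by
    simpa only [smul_smul] using hv.const_smul (α m)
  constructor
  · intro hX k hk
    have hcoeff : α k * ⟪e k, v⟫_𝕜 = α m * ⟪e k, v⟫_𝕜 :=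
      (hb.inner_eq_of_hasSum hX k).symm.trans (hb.inner_eq_of_hasSum hscaled k)
    exact (mul_eq_mul_right_iff.mp hcoeff).resolve_left (hα.ne hk)
  · intro h
    convert hscaled using 2 with k
    by_cases hk : k = m
    · rw [hk]
    · simp [h k hk]

end Biorthogonal

end BiorthogonalSystems

namespace Biorthogonal

variable {𝕜 H : Type*} [RCLike 𝕜] [NormedAddCommGroup H] [InnerProductSpace 𝕜 H] {e f : ℕ → H}

theorem exists_lowering_iff (hb : Biorthogonal 𝕜 e f) {w : ℕ → H}
    (hw : ∀ k, HasSum (fun j => ⟪e j, w k⟫_𝕜 • f j) (w k)) :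
    (∃ β : ℕ → 𝕜, β 0 = 0 ∧ ∀ k, w k = β k • f (k - 1)) ↔
      ∀ n k, k ≠ n + 1 → ⟪e n, w k⟫_𝕜 = 0 := by
  constructor
  · rintro ⟨β, hβ0, hβ⟩ n k hk
    rcases k with _ | j
    · simp [hβ, hβ0]
    · simp [hβ, hb.inner_smul, show n ≠ j by omega]
  · intro h
    refine ⟨fun k => if k = 0 then 0 else ⟪e (k - 1), w k⟫_𝕜, rfl, fun k => ?_⟩
    rcases k with _ | j
    · have hw0 := hw 0
      simp only [fun n => h n 0 n.succ_ne_zero.symm, zero_smul] at hw0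
      simpa using hw0.unique hasSum_zero
    · exact eq_smul_of_hasSum_of_ne (hw (j + 1)) fun n hn => h n (j + 1) (by omega)

end Biorthogonal

theorem nonlinear_CR_raising_equivalences_general
    {H : Type*} [NormedAddCommGroup H] [InnerProductSpace ℂ H]
    (D : Submodule ℂ H)
    (φ ψ : ℕ → H) (hφD : ∀ n, φ n ∈ D) (hψD : ∀ n, ψ n ∈ D)
    (hbi : ∀ i j, ⟪φ i, ψ j⟫ = if i = j then (1 : ℂ) else 0)
    -- `{φ_n}` and `{ψ_n}` are biorthogonal (Schauder) bases
    (hexpφ : ∀ ξ : H, HasSum (fun k => ⟪ψ k, ξ⟫ • φ k) ξ)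
    (hexpψ : ∀ ξ : H, HasSum (fun k => ⟪φ k, ξ⟫ • ψ k) ξ)
    (α : ℕ → ℝ) (hαinj : Function.Injective α)
    (T Tadj : H →ₗ[ℂ] H)
    (hTadj : ∀ ξ ∈ D, ∀ η ∈ D, ⟪T ξ, η⟫ = ⟪ξ, Tadj η⟫) :
    -- (1) ↔ (2),  where `X* ξ = Σ_k α_k ⟨ξ, ψ_k⟩ φ_k`
    ((∀ n, HasSum (fun k => ((α k : ℂ) * ⟪ψ k, T (φ n)⟫) • φ k)
        ((α (n + 1) : ℂ) • T (φ n))) ↔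
      (∀ n, ∃ γ : ℂ, T (φ n) = γ • φ (n + 1))) ∧
    -- (2) ↔ (3)
    ((∀ n, ∃ γ : ℂ, T (φ n) = γ • φ (n + 1)) ↔
      (∃ β : ℕ → ℂ, β 0 = 0 ∧ ∀ n, Tadj (ψ n) = β n • ψ (n - 1))) ∧
    -- moreover `β_n = conj (γ_{n-1})`
    (∀ γ β : ℕ → ℂ, (∀ n, T (φ n) = γ n • φ (n + 1)) →
      (β 0 = 0 ∧ ∀ n, Tadj (ψ n) = β n • ψ (n - 1)) →
      ∀ n, 1 ≤ n → β n = conj (γ (n - 1))) := by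
  have hb : Biorthogonal ℂ φ ψ := hbi
  have hadj : ∀ n k, ⟪φ n, Tadj (ψ k)⟫ = ⟪T (φ n), ψ k⟫ := fun n k =>
    (hTadj _ (hφD n) _ (hψD k)).symm
  refine ⟨forall_congr' fun n =>
      hb.symm.hasSum_smul_iff_exists_eq_smul (Complex.ofReal_injective.comp hαinj) (hexpφ _) _,
    ?_, ?_⟩
  · rw [forall_congr' fun n => hb.symm.exists_eq_smul_iff (hexpφ _) (n + 1),
      hb.exists_lowering_iff fun k => hexpψ _]
    simp only [hadj, ← inner_conj_symm (ψ _), map_eq_zero]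
  · rintro γ β hγ ⟨-, hβ⟩ n hn
    obtain ⟨m, rfl⟩ : ∃ m, n = m + 1 := ⟨n - 1, by omega⟩
    calc β (m + 1) = ⟪φ m, Tadj (ψ (m + 1))⟫ := by simp [hβ, hb.inner_smul]
      _ = conj (γ m) := by simp [hadj, hγ, hb (m + 1) (m + 1)]
      _ = conj (γ (m + 1 - 1)) := rfl

/-- Proposition 4.3: for `S, T` satisfying the nonlinear weak commutation relation with
`Sφ₀ = 0` and the `α_k`'s all distinct, the following are equivalent:
(1) `X*(Tφ_n) = α_{n+1}(Tφ_n)` for all `n`;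
(2) `Tφ_n = γ_n φ_{n+1}` for some constants `γ_n`;
(3) `T†ψ_n = β_n ψ_{n-1}` for some constants `β_n` with `β₀ = 0`.
Moreover `β_n = conj (γ_{n-1})` for `n ≥ 1`. -/
theorem nonlinear_CR_raising_equivalences
    {H : Type*} [NormedAddCommGroup H] [InnerProductSpace ℂ H] [CompleteSpace H]
    (D : Submodule ℂ H) (hD : Dense (D : Set H))
    (φ ψ : ℕ → H) (hφD : ∀ n, φ n ∈ D) (hψD : ∀ n, ψ n ∈ D)
    (hbi : ∀ i j, ⟪φ i, ψ j⟫ = if i = j then (1 : ℂ) else 0)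
    -- `{φ_n}` and `{ψ_n}` are biorthogonal (Schauder) bases
    (hexpφ : ∀ ξ : H, HasSum (fun k => ⟪ψ k, ξ⟫ • φ k) ξ)
    (hexpψ : ∀ ξ : H, HasSum (fun k => ⟪φ k, ξ⟫ • ψ k) ξ)
    (α : ℕ → ℝ) (hαpos : ∀ k, 0 < α k) (hαinj : Function.Injective α)
    -- `X = Σ_k α_k (ψ_k ⊗ φ̄_k)` with `D ⊆ D(X)`
    (Xop : H → H)
    (hX : ∀ ξ ∈ D, HasSum (fun k => ((α k : ℂ) * ⟪φ k, ξ⟫) • ψ k) (Xop ξ))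
    (S T Sadj Tadj : H →ₗ[ℂ] H)
    (hSadj : ∀ ξ ∈ D, ∀ η ∈ D, ⟪S ξ, η⟫ = ⟪ξ, Sadj η⟫)
    (hTadj : ∀ ξ ∈ D, ∀ η ∈ D, ⟪T ξ, η⟫ = ⟪ξ, Tadj η⟫)
    -- the nonlinear weak commutation relation
    (hCR : ∀ ξ ∈ D, ∀ η ∈ D, ⟪T ξ, Sadj η⟫ - ⟪S ξ, Tadj η⟫ = ⟪ξ, Xop η⟫)
    (hS0 : S (φ 0) = 0) :
    -- (1) ↔ (2),  where `X* ξ = Σ_k α_k ⟨ξ, ψ_k⟩ φ_k`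
    ((∀ n, HasSum (fun k => ((α k : ℂ) * ⟪ψ k, T (φ n)⟫) • φ k)
        ((α (n + 1) : ℂ) • T (φ n))) ↔
      (∀ n, ∃ γ : ℂ, T (φ n) = γ • φ (n + 1))) ∧
    -- (2) ↔ (3)
    ((∀ n, ∃ γ : ℂ, T (φ n) = γ • φ (n + 1)) ↔
      (∃ β : ℕ → ℂ, β 0 = 0 ∧ ∀ n, Tadj (ψ n) = β n • ψ (n - 1))) ∧
    -- moreover `β_n = conj (γ_{n-1})`
    (∀ γ β : ℕ → ℂ, (∀ n, T (φ n) = γ n • φ (n + 1)) →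
      (β 0 = 0 ∧ ∀ n, Tadj (ψ n) = β n • ψ (n - 1)) →
      ∀ n, 1 ≤ n → β n = conj (γ (n - 1))) :=
  nonlinear_CR_raising_equivalences_general D φ ψ hφD hψD hbi hexpφ hexpψ α hαinj T Tadj hTadj
end

section
/- In the setting of the nonlinear weak commutation relation, suppose Sφ₀ = 0, T*ψ₀ = 0, all α_k are distinct, Tφ_n = γ_n φ_{n+1} and S*ψ_n = γ̃_n ψ_{n+1} for all n ≥ 0 (with the eigenvector conditions X*(Tφ_n) = α_{n+1}(Tφ_n) and X(S*ψ_n) = α_{n+1}(S*ψ_n)). Then α_n = γ_n·conjugate(γ̃_n) − γ_{n−1}·conjugate(γ̃_{n−1}) for all n (with γ_{−1} = γ̃_{−1} = 0); equivalently α_n = γ_n·conjugate(γ̃_n) − Σ_{k=0}^{n−1} α_k. -/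
open scoped ComplexInnerProductSpace ComplexConjugate

/-- In the nonlinear weak commutation relation setting, with `Sφ₀ = 0`, `T†ψ₀ = 0`,
`Tφ_n = γ_n φ_{n+1}` and `S†ψ_n = γ̃_n ψ_{n+1}`, one has
`α_n = γ_n conj(γ̃_n) − γ_{n-1} conj(γ̃_{n-1})` (with `γ_{-1} = γ̃_{-1} = 0`), equivalently
`α_n = γ_n conj(γ̃_n) − Σ_{k<n} α_k`. -/
theorem nonlinear_CR_alpha_gamma_relation
    {H : Type*} [NormedAddCommGroup H] [InnerProductSpace ℂ H] [CompleteSpace H]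
    (D : Submodule ℂ H) (hD : Dense (D : Set H))
    (φ ψ : ℕ → H) (hφD : ∀ n, φ n ∈ D) (hψD : ∀ n, ψ n ∈ D)
    (hbi : ∀ i j, ⟪φ i, ψ j⟫ = if i = j then (1 : ℂ) else 0)
    (hexpφ : ∀ ξ : H, HasSum (fun k => ⟪ψ k, ξ⟫ • φ k) ξ)
    (hexpψ : ∀ ξ : H, HasSum (fun k => ⟪φ k, ξ⟫ • ψ k) ξ)
    (α : ℕ → ℝ) (hαpos : ∀ k, 0 < α k) (hαinj : Function.Injective α)
    (Xop : H → H)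
    (hX : ∀ ξ ∈ D, HasSum (fun k => ((α k : ℂ) * ⟪φ k, ξ⟫) • ψ k) (Xop ξ))
    (S T Sadj Tadj : H →ₗ[ℂ] H)
    (hSadj : ∀ ξ ∈ D, ∀ η ∈ D, ⟪S ξ, η⟫ = ⟪ξ, Sadj η⟫)
    (hTadj : ∀ ξ ∈ D, ∀ η ∈ D, ⟪T ξ, η⟫ = ⟪ξ, Tadj η⟫)
    (hCR : ∀ ξ ∈ D, ∀ η ∈ D, ⟪T ξ, Sadj η⟫ - ⟪S ξ, Tadj η⟫ = ⟪ξ, Xop η⟫)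
    (hS0 : S (φ 0) = 0) (hT0 : Tadj (ψ 0) = 0)
    (γ γt : ℕ → ℂ)
    (hγ : ∀ n, T (φ n) = γ n • φ (n + 1))
    (hγt : ∀ n, Sadj (ψ n) = γt n • ψ (n + 1)) :
    ((α 0 : ℂ) = γ 0 * conj (γt 0)) ∧
    (∀ n, 1 ≤ n → (α n : ℂ) = γ n * conj (γt n) - γ (n - 1) * conj (γt (n - 1))) ∧
    (∀ n, (α n : ℂ) = γ n * conj (γt n) - ∑ k ∈ Finset.range n, (α k : ℂ)) := by
  classical
  -- conjugate biorthogonality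
  have hbi' : ∀ i j, ⟪ψ i, φ j⟫ = if j = i then (1 : ℂ) else 0 := by
    intro i j
    rw [← inner_conj_symm, hbi]
    split <;> simp
  -- S (φ (m+1)) = conj (γt m) • φ m
  have hSφ : ∀ m : ℕ, S (φ (m + 1)) = conj (γt m) • φ m := by
    intro m
    have h1 := hexpφ (S (φ (m + 1)))
    have h2 : HasSum (fun k => ⟪ψ k, S (φ (m + 1))⟫ • φ k) (conj (γt m) • φ m) := by
      have hf : (fun k => ⟪ψ k, S (φ (m + 1))⟫ • φ k)
          = fun k => if k = m then conj (γt m) • φ m else 0 := by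
        funext k
        have hc : ⟪ψ k, S (φ (m + 1))⟫ = if k = m then conj (γt m) else 0 := by
          rw [← inner_conj_symm, hSadj (φ (m + 1)) (hφD _) (ψ k) (hψD _), hγt,
            inner_smul_right, hbi]
          by_cases h : k = m
          · subst h; simp
          · rw [if_neg h, if_neg (fun h' => h (Nat.succ_injective h').symm), mul_zero, map_zero]
        rw [hc]
        by_cases h : k = m <;> simp [h]
      rw [hf]
      exact hasSum_ite_eq m _
    exact h1.unique h2
  -- Tadj (ψ (m+1)) = conj (γ m) • ψ m
  have hTψ : ∀ m : ℕ, Tadj (ψ (m + 1)) = conj (γ m) • ψ m := by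
    intro m
    have h1 := hexpψ (Tadj (ψ (m + 1)))
    have h2 : HasSum (fun k => ⟪φ k, Tadj (ψ (m + 1))⟫ • ψ k) (conj (γ m) • ψ m) := by
      have hf : (fun k => ⟪φ k, Tadj (ψ (m + 1))⟫ • ψ k)
          = fun k => if k = m then conj (γ m) • ψ m else 0 := by
        funext k
        have hc : ⟪φ k, Tadj (ψ (m + 1))⟫ = if k = m then conj (γ m) else 0 := by
          rw [← hTadj (φ k) (hφD _) (ψ (m + 1)) (hψD _), hγ, inner_smul_left, hbi]
          by_cases h : k = m
          · subst h; simp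
          · rw [if_neg h, if_neg (fun h' => h (Nat.succ_injective h')), mul_zero]
        rw [hc]
        by_cases h : k = m <;> simp [h]
      rw [hf]
      exact hasSum_ite_eq m _
    exact h1.unique h2
  -- ⟪φ n, Xop (ψ n)⟫ = α n
  have hXeig : ∀ n, ⟪φ n, Xop (ψ n)⟫ = (α n : ℂ) := by
    intro n
    have h1 := (innerSL ℂ (φ n)).hasSum (hX (ψ n) (hψD n))
    have h2 : HasSum (fun k => (innerSL ℂ (φ n)) (((α k : ℂ) * ⟪φ k, ψ n⟫) • ψ k))
        ((α n : ℂ)) := by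
      have hf : (fun k => (innerSL ℂ (φ n)) (((α k : ℂ) * ⟪φ k, ψ n⟫) • ψ k))
          = fun k => if k = n then (α n : ℂ) else 0 := by
        funext k
        simp only [innerSL_apply_apply, inner_smul_right, hbi]
        by_cases h : k = n <;> simp [h]
      rw [hf]
      exact hasSum_ite_eq n _
    have := h1.unique h2
    simpa using this
  -- first term of CR
  have hTerm1 : ∀ n, ⟪T (φ n), Sadj (ψ n)⟫ = conj (γ n) * γt n := by
    intro n
    rw [hγ, hγt, inner_smul_left, inner_smul_right, hbi]
    simp [mul_comm]
  -- main identity (unconjugated)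
  have hmain : ∀ n, (α n : ℂ)
      = γ n * conj (γt n) - (if n = 0 then 0 else γ (n - 1) * conj (γt (n - 1))) := by
    intro n
    have hcr := hCR (φ n) (hφD n) (ψ n) (hψD n)
    rw [hXeig, hTerm1] at hcr
    have ht2 : ⟪S (φ n), Tadj (ψ n)⟫
        = if n = 0 then 0 else conj (γ (n - 1)) * γt (n - 1) := by
      cases n with
      | zero => simp [hS0]
      | succ m =>
        rw [hSφ, hTψ, inner_smul_left, inner_smul_right, hbi]
        simp [mul_comm]
    rw [ht2] at hcr
    have := congrArg conj hcr.symm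
    simp only [map_sub, map_mul, RingHom.id_apply, Complex.conj_conj, Complex.conj_ofReal,
      apply_ite conj, map_zero] at this
    rw [this]
  have h0 : (α 0 : ℂ) = γ 0 * conj (γt 0) := by simpa using hmain 0
  have h1 : ∀ n, 1 ≤ n → (α n : ℂ) = γ n * conj (γt n) - γ (n - 1) * conj (γt (n - 1)) := by
    intro n hn
    have := hmain n
    rw [if_neg (by omega)] at this
    exact this
  refine ⟨h0, h1, ?_⟩
  -- partial-sum form, by proving γ n * conj (γt n) = Σ_{k ≤ n} α k
  have hsum : ∀ n, γ n * conj (γt n) = ∑ k ∈ Finset.range (n + 1), (α k : ℂ) := by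
    intro n
    induction n with
    | zero => simp [h0.symm]
    | succ m ih =>
      have := h1 (m + 1) (by omega)
      simp only [Nat.add_sub_cancel] at this
      rw [Finset.sum_range_succ, ← ih]
      linear_combination -this
  intro n
  cases n with
  | zero => simpa using h0
  | succ m =>
    rw [hsum m.succ, Finset.sum_range_succ]
    ring
end
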